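/- arXiv:1608.00925 — 2 statements merged into one kernel-verified Lean document; each statement's English description precedes it below -/
import Mathlib

section
/- (Proposition 4, one-sided variation) Let r > 0 and let P be the Half-Gaussian probability density P(ψ) = (2/(π·r))·exp(−ψ²/(π·r²)) for ψ ≥ 0 and P(ψ) = 0 otherwise (so the mean is μ = r). Then for every c_e ≥ 0, the one-sided energy variation satisfies E_var(c_e) = (g_e²/2)·[(2·c_e² + π)·(1 − erf(c_e/√π)) − 2·c_e·exp(−c_e²/π)]·r², where erf(x) = (2/√π)·∫₀^x exp(−t²) dt. -/
/-!
On `ψ ≥ 0` the density is `2/(πr) · e^{-bψ²}` with `b = 1/(πr²)`. Since `(x - a)² e^{-bx²}` is the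
derivative of `-(x - 2a) e^{-bx²} / (2b)` plus `(a² + 1/(2b)) e^{-bx²}`, the variation reduces to
a Gaussian tail integral, which the substitution `t = √b x` expresses through `erf`.
-/

open MeasureTheory Set Real

/-- One-sided energy variation `E_var(c) = g_e²·∫_{c·μ}^∞ (ψ − c·μ)² P(ψ) dψ`. -/
noncomputable def Evar (P : ℝ → ℝ) (g_e μ c : ℝ) : ℝ :=
  g_e ^ 2 * ∫ ψ in Ioi (c * μ), (ψ - c * μ) ^ 2 * P ψ

/-- The error function `erf(x) = (2/√π)·∫₀^x exp(−t²) dt`. -/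
noncomputable def erf (x : ℝ) : ℝ :=
  (2 / Real.sqrt π) * ∫ t in (0:ℝ)..x, Real.exp (-t ^ 2)

/-- The Half-Gaussian density with mean `r`:
`P(ψ) = (2/(π·r))·exp(−ψ²/(π·r²))` for `ψ ≥ 0`, `0` otherwise. -/
noncomputable def halfGaussianPDF (r : ℝ) : ℝ → ℝ :=
  fun ψ => if 0 ≤ ψ then (2 / (π * r)) * Real.exp (-ψ ^ 2 / (π * r ^ 2)) else 0

open Filter Topology

lemma integral_Ioi_exp_neg_sq (s : ℝ) :
    ∫ t in Ioi s, exp (-t ^ 2) = √π / 2 * (1 - erf s) := by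
  have hint : Integrable fun t : ℝ => exp (-t ^ 2) := by
    simpa using integrable_exp_neg_mul_sq one_pos
  have hhalf : ∫ t in Ioi 0, exp (-t ^ 2) = √π / 2 := by
    simpa using integral_gaussian_Ioi 1
  have hsplit := intervalIntegral.integral_Ioi_sub_Ioi' hint.integrableOn hint.integrableOn
    (a := 0) (b := s)
  rw [erf, ← hsplit, hhalf]
  field_simp
  ring

lemma integral_Ioi_exp_neg_mul_sq {b : ℝ} (hb : 0 < b) (a : ℝ) :
    ∫ x in Ioi a, exp (-b * x ^ 2) = √π / (2 * √b) * (1 - erf (√b * a)) := by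
  have hsb : 0 < √b := sqrt_pos.mpr hb
  have hscale : ∀ x : ℝ, exp (-b * x ^ 2) = exp (-(√b * x) ^ 2) := fun x => by
    rw [mul_pow, sq_sqrt hb.le, neg_mul]
  simp_rw [hscale]
  rw [integral_comp_mul_left_Ioi (fun t => exp (-t ^ 2)) a hsb, integral_Ioi_exp_neg_sq,
    smul_eq_mul]
  field_simp

lemma integral_Ioi_sub_sq_mul_exp_neg_mul_sq {b : ℝ} (hb : 0 < b) (a : ℝ) :
    ∫ x in Ioi a, (x - a) ^ 2 * exp (-b * x ^ 2)
      = (a ^ 2 + 1 / (2 * b)) * (∫ x in Ioi a, exp (-b * x ^ 2))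
        - a * exp (-b * a ^ 2) / (2 * b) := by
  set F : ℝ → ℝ := fun x => -(x - 2 * a) * exp (-b * x ^ 2) / (2 * b)
  set F' : ℝ → ℝ := fun x => (x - a) ^ 2 * exp (-b * x ^ 2)
    - (a ^ 2 + 1 / (2 * b)) * exp (-b * x ^ 2)
  have hderiv : ∀ x, HasDerivAt F (F' x) x := fun x => by
    have hexp : HasDerivAt (fun x : ℝ => exp (-b * x ^ 2)) (exp (-b * x ^ 2) * (-b * (2 * x))) x :=
      by simpa using ((hasDerivAt_pow 2 x).const_mul (-b)).exp
    refine ((((hasDerivAt_id x).sub_const (2 * a)).neg.mul hexp).div_const (2 * b)).congr_deriv ?_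
    simp only [F', id, Pi.neg_apply]
    field_simp
    ring
  have hgauss := integrable_exp_neg_mul_sq hb
  have hmul := integrable_mul_exp_neg_mul_sq hb
  have hsq : Integrable fun x : ℝ => x ^ 2 * exp (-b * x ^ 2) := by
    simpa using integrable_rpow_mul_exp_neg_mul_sq hb (s := 2) (by norm_num)
  have hF : Integrable F :=
    (((hmul.sub (hgauss.const_mul (2 * a))).neg).div_const (2 * b)).congr
      (Eventually.of_forall fun x => by simp only [F, Pi.neg_apply, Pi.sub_apply]; ring)
  have hF' : Integrable F' :=
    ((hsq.sub (hmul.const_mul (2 * a))).sub (hgauss.const_mul (1 / (2 * b)))).congr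
      (Eventually.of_forall fun x => by simp only [F', Pi.sub_apply]; ring)
  have hlim : Tendsto F atTop (𝓝 0) :=
    tendsto_zero_of_hasDerivAt_of_integrableOn_Ioi (a := 0) (fun x _ => hderiv x)
      hF'.integrableOn hF.integrableOn
  have hFTC := integral_Ioi_of_hasDerivAt_of_tendsto' (a := a) (fun x _ => hderiv x)
    hF'.integrableOn hlim
  have hsplit : ∫ x in Ioi a, (x - a) ^ 2 * exp (-b * x ^ 2)
      = ∫ x in Ioi a, F' x + (a ^ 2 + 1 / (2 * b)) * exp (-b * x ^ 2) := by
    congr 1; ext x; simp only [F']; ring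
  rw [hsplit, integral_add hF'.integrableOn (hgauss.const_mul _).integrableOn,
    integral_const_mul, hFTC]
  simp only [F]
  ring

lemma halfGaussianPDF_of_nonneg (r : ℝ) {ψ : ℝ} (hψ : 0 ≤ ψ) :
    halfGaussianPDF r ψ = 2 / (π * r) * exp (-(π * r ^ 2)⁻¹ * ψ ^ 2) := by
  rw [halfGaussianPDF, if_pos hψ, neg_div, div_eq_inv_mul (ψ ^ 2), neg_mul]

lemma integral_Ioi_sub_sq_mul_halfGaussianPDF {r c : ℝ} (hr : 0 < r) (hc : 0 ≤ c) :
    ∫ ψ in Ioi (c * r), (ψ - c * r) ^ 2 * halfGaussianPDF r ψ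
      = ((2 * c ^ 2 + π) * (1 - erf (c / √π)) - 2 * c * exp (-c ^ 2 / π)) * r ^ 2 / 2 := by
  have hb : 0 < (π * r ^ 2)⁻¹ := by positivity
  have hsqrt : √((π * r ^ 2)⁻¹) = (√π * r)⁻¹ := by
    rw [sqrt_inv, sqrt_mul pi_pos.le, sqrt_sq hr.le]
  have harg : √((π * r ^ 2)⁻¹) * (c * r) = c / √π := by
    rw [hsqrt]; field_simp
  have hexp : -(π * r ^ 2)⁻¹ * (c * r) ^ 2 = -c ^ 2 / π := by
    field_simp
  calc ∫ ψ in Ioi (c * r), (ψ - c * r) ^ 2 * halfGaussianPDF r ψ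
      = 2 / (π * r) * ∫ ψ in Ioi (c * r), (ψ - c * r) ^ 2 * exp (-(π * r ^ 2)⁻¹ * ψ ^ 2) := by
        rw [← integral_const_mul]
        refine setIntegral_congr_fun measurableSet_Ioi fun ψ hψ => ?_
        rw [halfGaussianPDF_of_nonneg r ((mul_nonneg hc hr.le).trans hψ.out.le)]
        ring
    _ = _ := by
        rw [integral_Ioi_sub_sq_mul_exp_neg_mul_sq hb, integral_Ioi_exp_neg_mul_sq hb, harg, hexp,
          hsqrt]
        field_simp
        rw [sq_sqrt pi_pos.le]
        ring

theorem stmt_17_general (r g_e : ℝ) (hr : 0 < r) :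
    ∀ c_e : ℝ, 0 ≤ c_e →
      Evar (halfGaussianPDF r) g_e r c_e
        = (g_e ^ 2 / 2) * ((2 * c_e ^ 2 + π) * (1 - erf (c_e / Real.sqrt π))
            - 2 * c_e * Real.exp (-c_e ^ 2 / π)) * r ^ 2 := by
  intro c_e hc
  rw [Evar, integral_Ioi_sub_sq_mul_halfGaussianPDF hr hc]
  ring

/-- (Proposition 4, one-sided variation) For the Half-Gaussian density with mean `μ = r`,
for every `c_e ≥ 0`,
`E_var(c_e) = (g_e²/2)·[(2·c_e² + π)·(1 − erf(c_e/√π)) − 2·c_e·exp(−c_e²/π)]·r²`. -/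
theorem stmt_17 (r g_e : ℝ) (hr : 0 < r) (hg : 0 < g_e) :
    ∀ c_e : ℝ, 0 ≤ c_e →
      Evar (halfGaussianPDF r) g_e r c_e
        = (g_e ^ 2 / 2) * ((2 * c_e ^ 2 + π) * (1 - erf (c_e / Real.sqrt π))
            - 2 * c_e * Real.exp (-c_e ^ 2 / π)) * r ^ 2 :=
  stmt_17_general r g_e hr
end

section
/- (Proposition 5) Let α > 2, R > 0, and set v = (α − 1)·R/α. Let P be the Pareto probability density P(ψ) = α·v^α/ψ^{α+1} for ψ ≥ v and P(ψ) = 0 otherwise (so the mean is μ_b = R). Then for every c_b ≥ v, the expected billing cost satisfies B_exp(c_b) = (g_b − i_b)·R + (i_b + p_b)·(α − 1)^{α−1}·R^α/(α^α·c_b^{α−1}) + i_b·c_b; the global minimizer of B_exp over [v, ∞) is c_b* = ((i_b + p_b)/i_b)^{1/α}·(α − 1)·R/α; and the minimum value is B_exp(c_b*) = [g_b − i_b + i_b·((i_b + p_b)/i_b)^{1/α}]·R. -/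
open MeasureTheory Set

/-!
The Pareto density vanishes below its scale `v` and equals `α v^α ψ^(-α-1)` above it, which has
an elementary antiderivative; with mean `μ = α v / (α - 1)` this gives
`B(c) = (g - i) μ + (i + p) v^α c^(1-α) / (α - 1) + i c` for `c ≥ v`.
Writing `(i + p) v^α = i m^α` with `m = ((i + p) / i)^(1/α) v`, the `c`-dependent part is
`i (m^α c^(1-α) / (α - 1) + c)`, and Bernoulli's inequality `(m / c)^α ≥ 1 + α (m / c - 1)`
shows that it is minimal at `c = m`, with value `i α m / (α - 1) = i ((i + p) / i)^(1/α) μ`.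
-/

/-- Expected billing cost
`B_exp(c) = μ_b·(g_b + p_b) − p_b·c + (i_b + p_b)·∫₀^c (c − ψ) P(ψ) dψ`. -/
noncomputable def Bexp (P : ℝ → ℝ) (g_b i_b p_b μb c : ℝ) : ℝ :=
  μb * (g_b + p_b) - p_b * c + (i_b + p_b) * ∫ ψ in (0:ℝ)..c, (c - ψ) * P ψ

/-- The Pareto density with scale `v > 0` and shape `α`. -/
noncomputable def paretoPDF (α v : ℝ) : ℝ → ℝ :=
  fun ψ => if v ≤ ψ then α * v ^ α / ψ ^ (α + 1) else 0

lemma paretoPDF_of_lt {α v ψ : ℝ} (h : ψ < v) : paretoPDF α v ψ = 0 :=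
  if_neg h.not_ge

lemma paretoPDF_of_le {α v ψ : ℝ} (h : v ≤ ψ) :
    paretoPDF α v ψ = α * v ^ α / ψ ^ (α + 1) :=
  if_pos h

lemma hasDerivAt_pareto_antideriv {α v c ψ : ℝ} (hα : α ≠ 1) (hψ : 0 < ψ) :
    HasDerivAt (fun x => v ^ α * (α / (α - 1) * x ^ (1 - α) - c * x ^ (-α)))
      ((c - ψ) * (α * v ^ α / ψ ^ (α + 1))) ψ := by
  have h1 := Real.hasDerivAt_rpow_const (p := 1 - α) (Or.inl hψ.ne')
  have h2 := Real.hasDerivAt_rpow_const (p := -α) (Or.inl hψ.ne')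
  refine (((h1.const_mul (α / (α - 1))).sub (h2.const_mul c)).const_mul (v ^ α)).congr_deriv ?_
  have hα1 : α - 1 ≠ 0 := sub_ne_zero.2 hα
  have hψα : ψ ^ α ≠ 0 := (Real.rpow_pos_of_pos hψ α).ne'
  rw [show 1 - α - 1 = -α by ring, show -α - 1 = -(α + 1) by ring, Real.rpow_neg hψ.le,
    Real.rpow_neg hψ.le, Real.rpow_add_one hψ.ne']
  field_simp
  ring

theorem integral_sub_mul_paretoPDF {α v c : ℝ} (hα : 1 < α) (hv : 0 < v) (hvc : v ≤ c) :
    ∫ ψ in (0:ℝ)..c, (c - ψ) * paretoPDF α v ψ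
      = v ^ α * c ^ (1 - α) / (α - 1) + c - α * v / (α - 1) := by
  set f := fun ψ => (c - ψ) * paretoPDF α v ψ
  set g := fun ψ => (c - ψ) * (α * v ^ α / ψ ^ (α + 1))
  have hf_zero : ∀ ψ ∈ Ioo 0 v, f ψ = 0 := fun ψ hψ => by
    simp only [f, paretoPDF_of_lt hψ.2, mul_zero]
  have hfg : EqOn f g (uIcc v c) := fun ψ hψ => by
    simp only [f, g, paretoPDF_of_le (uIcc_of_le hvc ▸ hψ).1]
  have hg_cont : ContinuousOn g (uIcc v c) := by
    rw [uIcc_of_le hvc]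
    refine continuousOn_const.sub continuousOn_id |>.mul (continuousOn_const.div ?_ ?_)
    · exact fun x hx => (Real.continuousAt_rpow_const x _
        (Or.inl (hv.trans_le hx.1).ne')).continuousWithinAt
    · exact fun x hx => (Real.rpow_pos_of_pos (hv.trans_le hx.1) _).ne'
  have hf_int₁ : IntervalIntegrable f volume 0 v :=
    (intervalIntegrable_iff_integrableOn_Ioo_of_le hv.le).2 <|
      integrableOn_zero.congr_fun (fun ψ hψ => (hf_zero ψ hψ).symm) measurableSet_Ioo
  have hf_int₂ : IntervalIntegrable f volume v c :=
    (hg_cont.intervalIntegrable).congr (hfg.symm.mono uIoc_subset_uIcc)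
  have hf₁ : ∫ ψ in (0:ℝ)..v, f ψ = 0 := by
    rw [intervalIntegral.integral_of_le hv.le, integral_Ioc_eq_integral_Ioo]
    exact setIntegral_eq_zero_of_forall_eq_zero hf_zero
  have hf₂ : ∫ ψ in v..c, f ψ
      = v ^ α * (α / (α - 1) * c ^ (1 - α) - c * c ^ (-α))
        - v ^ α * (α / (α - 1) * v ^ (1 - α) - c * v ^ (-α)) := by
    rw [intervalIntegral.integral_congr hfg]
    refine intervalIntegral.integral_eq_sub_of_hasDerivAt
      (f := fun x => v ^ α * (α / (α - 1) * x ^ (1 - α) - c * x ^ (-α))) (fun ψ hψ => ?_)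
      hg_cont.intervalIntegrable
    exact hasDerivAt_pareto_antideriv hα.ne' (hv.trans_le (uIcc_of_le hvc ▸ hψ).1)
  rw [← intervalIntegral.integral_add_adjacent_intervals hf_int₁ hf_int₂, hf₁, hf₂]
  have hc : 0 < c := hv.trans_le hvc
  have hα1 : α - 1 ≠ 0 := by linarith
  rw [Real.rpow_neg hc.le, Real.rpow_neg hv.le, Real.rpow_sub hc, Real.rpow_sub hv,
    Real.rpow_one, Real.rpow_one]
  have : c ^ α ≠ 0 := (Real.rpow_pos_of_pos hc α).ne'
  have : v ^ α ≠ 0 := (Real.rpow_pos_of_pos hv α).ne'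
  field_simp
  ring

theorem Bexp_paretoPDF {α v μ c : ℝ} (g i p : ℝ) (hα : 1 < α) (hv : 0 < v)
    (hμ : α * v = (α - 1) * μ) (hvc : v ≤ c) :
    Bexp (paretoPDF α v) g i p μ c
      = (g - i) * μ + (i + p) * v ^ α * c ^ (1 - α) / (α - 1) + i * c := by
  have hmean : α * v / (α - 1) = μ := by
    rw [hμ, mul_div_cancel_left₀ _ (by linarith)]
  rw [Bexp, integral_sub_mul_paretoPDF hα hv hvc, hmean]
  ring

lemma rpow_mul_rpow_one_sub_div_add_self {α m : ℝ} (hα : 1 < α) (hm : 0 < m) :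
    m ^ α * m ^ (1 - α) / (α - 1) + m = α * m / (α - 1) := by
  rw [← Real.rpow_add hm, add_sub_cancel, Real.rpow_one]
  field_simp [(by linarith : α - 1 ≠ 0)]
  ring

lemma isMinOn_rpow_mul_rpow_one_sub_div_add {α m : ℝ} (hα : 1 < α) (hm : 0 < m) :
    IsMinOn (fun c => m ^ α * c ^ (1 - α) / (α - 1) + c) (Ioi 0) m := by
  refine isMinOn_iff.2 fun c (hc : 0 < c) => ?_
  rw [rpow_mul_rpow_one_sub_div_add_self hα hm]
  have hbern : 1 + α * (m / c - 1) ≤ (m / c) ^ α := by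
    have : 0 ≤ m / c := by positivity
    simpa using one_add_mul_self_le_rpow_one_add (s := m / c - 1) (by linarith) hα.le
  have hcα : 0 < c ^ α := Real.rpow_pos_of_pos hc α
  rw [Real.div_rpow hm.le hc.le, le_div_iff₀ hcα] at hbern
  rw [Real.rpow_sub hc, Real.rpow_one, div_add' _ _ _ (by linarith : α - 1 ≠ 0),
    div_le_div_iff_of_pos_right (by linarith)]
  field_simp at hbern ⊢
  linarith

lemma sub_one_mul_div_rpow_mul_rpow_one_sub_div {α R c : ℝ} (hα : 1 < α) (hR : 0 ≤ R)
    (hc : 0 < c) :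
    ((α - 1) * R / α) ^ α * c ^ (1 - α) / (α - 1)
      = (α - 1) ^ (α - 1) * R ^ α / (α ^ α * c ^ (α - 1)) := by
  have hα1 : 0 < α - 1 := by linarith
  rw [Real.div_rpow (by positivity) (by linarith), Real.mul_rpow hα1.le hR,
    Real.rpow_sub hα1, Real.rpow_one, show 1 - α = -(α - 1) by ring, Real.rpow_neg hc.le]
  field_simp

theorem stmt_18_general (α R g_b i_b p_b : ℝ) (hα : 2 < α) (hR : 0 < R)
    (hib : 0 < i_b) (hpb : 0 < p_b) :
    (∀ c_b : ℝ, (α - 1) * R / α ≤ c_b →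
      Bexp (paretoPDF α ((α - 1) * R / α)) g_b i_b p_b R c_b
        = (g_b - i_b) * R
          + (i_b + p_b) * (α - 1) ^ (α - 1) * R ^ α / (α ^ α * c_b ^ (α - 1))
          + i_b * c_b) ∧
    ((α - 1) * R / α ≤ ((i_b + p_b) / i_b) ^ (1 / α) * (α - 1) * R / α ∧
      ∀ c_b : ℝ, (α - 1) * R / α ≤ c_b →
        Bexp (paretoPDF α ((α - 1) * R / α)) g_b i_b p_b R
            (((i_b + p_b) / i_b) ^ (1 / α) * (α - 1) * R / α)
          ≤ Bexp (paretoPDF α ((α - 1) * R / α)) g_b i_b p_b R c_b) ∧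
    Bexp (paretoPDF α ((α - 1) * R / α)) g_b i_b p_b R
        (((i_b + p_b) / i_b) ^ (1 / α) * (α - 1) * R / α)
      = (g_b - i_b + i_b * ((i_b + p_b) / i_b) ^ (1 / α)) * R := by
  have hα1 : 1 < α := by linarith
  have hv : 0 < (α - 1) * R / α := div_pos (mul_pos (by linarith) hR) (by linarith)
  have hμ : α * ((α - 1) * R / α) = (α - 1) * R := by field_simp
  set v := (α - 1) * R / α
  set s := ((i_b + p_b) / i_b) ^ (1 / α)
  have hs : 1 ≤ s := Real.one_le_rpow ((one_le_div hib).2 (by linarith)) (by positivity)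
  have hcost : (i_b + p_b) * v ^ α = i_b * (s * v) ^ α := by
    rw [Real.mul_rpow (by positivity) hv.le, ← Real.rpow_mul (by positivity), one_div,
      inv_mul_cancel₀ (by positivity), Real.rpow_one]
    field_simp
  have hB : ∀ c, v ≤ c → Bexp (paretoPDF α v) g_b i_b p_b R c
      = (g_b - i_b) * R + i_b * ((s * v) ^ α * c ^ (1 - α) / (α - 1) + c) := by
    intro c hc
    rw [Bexp_paretoPDF g_b i_b p_b hα1 hv hμ hc, hcost]
    ring
  have hvs : v ≤ s * v := le_mul_of_one_le_left hv.le hs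
  rw [show s * (α - 1) * R / α = s * v by ring]
  refine ⟨fun c hc => ?_, ⟨hvs, fun c hc => ?_⟩, ?_⟩
  · rw [Bexp_paretoPDF g_b i_b p_b hα1 hv hμ hc, mul_assoc, mul_assoc, mul_div_assoc,
      sub_one_mul_div_rpow_mul_rpow_one_sub_div hα1 hR.le (hv.trans_le hc)]
    ring
  · rw [hB _ hvs, hB _ hc]
    gcongr _ + i_b * ?_
    exact isMinOn_iff.1 (isMinOn_rpow_mul_rpow_one_sub_div_add hα1 (by positivity)) c
      (hv.trans_le hc)
  · have hmin : α * (s * v) / (α - 1) = s * R := by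
      rw [mul_left_comm, hμ, mul_left_comm, mul_div_cancel_left₀ _ (by linarith)]
    rw [hB _ hvs, rpow_mul_rpow_one_sub_div_add_self hα1 (by positivity), hmin]
    ring

/-- (Proposition 5) For the Pareto density with shape `α > 2` and scale
`v = (α − 1)·R/α` (mean `μ_b = R`): for every `c_b ≥ v`,
`B_exp(c_b) = (g_b − i_b)·R + (i_b + p_b)·(α − 1)^{α−1}·R^α/(α^α·c_b^{α−1}) + i_b·c_b`;
the global minimizer of `B_exp` over `[v, ∞)` is
`c_b* = ((i_b + p_b)/i_b)^{1/α}·(α − 1)·R/α`; and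
`B_exp(c_b*) = [g_b − i_b + i_b·((i_b + p_b)/i_b)^{1/α}]·R`. -/
theorem stmt_18 (α R g_b i_b p_b : ℝ) (hα : 2 < α) (hR : 0 < R)
    (hgb : 0 < g_b) (hib : 0 < i_b) (hpb : 0 < p_b) :
    (∀ c_b : ℝ, (α - 1) * R / α ≤ c_b →
      Bexp (paretoPDF α ((α - 1) * R / α)) g_b i_b p_b R c_b
        = (g_b - i_b) * R
          + (i_b + p_b) * (α - 1) ^ (α - 1) * R ^ α / (α ^ α * c_b ^ (α - 1))
          + i_b * c_b) ∧
    ((α - 1) * R / α ≤ ((i_b + p_b) / i_b) ^ (1 / α) * (α - 1) * R / α ∧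
      ∀ c_b : ℝ, (α - 1) * R / α ≤ c_b →
        Bexp (paretoPDF α ((α - 1) * R / α)) g_b i_b p_b R
            (((i_b + p_b) / i_b) ^ (1 / α) * (α - 1) * R / α)
          ≤ Bexp (paretoPDF α ((α - 1) * R / α)) g_b i_b p_b R c_b) ∧
    Bexp (paretoPDF α ((α - 1) * R / α)) g_b i_b p_b R
        (((i_b + p_b) / i_b) ^ (1 / α) * (α - 1) * R / α)
      = (g_b - i_b + i_b * ((i_b + p_b) / i_b) ^ (1 / α)) * R :=
  stmt_18_general α R g_b i_b p_b hα hR hib hpb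
end
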